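/- arXiv:math/0601450 — 5 statements merged into one kernel-verified Lean document; each statement's English description precedes it below -/
import Mathlib

section
/- Let D = (α,β)_ℚ be a quaternion division algebra. If -1 has a square root in D, then D is isomorphic as a ℚ-algebra to a quaternion algebra (γ,-1)_ℚ for some nonzero rational γ. -/
/-!
If `y² = -1` in `D = (α,β)_ℚ`, then `y` is not a rational scalar, so it is not central and some
commutator `z = u y - y u` is nonzero. Since `y²` is central, `z` anticommutes with `y`; being a
commutator, `z` is a pure quaternion, so `z² = γ` is rational, and `γ ≠ 0` because `D` is a
division algebra. Thus `z, y` is a quaternionic basis of type `(γ, -1)` inside `D`. The induced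
algebra map `(γ,-1)_ℚ → D` is injective, because multiplying by the units `y` and `z`, which
commute or anticommute with each basis vector, isolates the coordinates; it is bijective since
both sides have dimension `4`.
-/

section AnticommutingElements

variable {K A : Type*} [Field K] [Ring A] [Algebra K A]

theorem isUnit_of_mul_self_eq_smul_one {c : K} (hc : c ≠ 0) {p : A} (hp : p * p = c • 1) :
    IsUnit p :=
  ⟨⟨p, c⁻¹ • p, by rw [mul_smul_comm, hp, smul_smul, inv_mul_cancel₀ hc, one_smul],
    by rw [smul_mul_assoc, hp, smul_smul, inv_mul_cancel₀ hc, one_smul]⟩, rfl⟩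

theorem mul_commutator_eq_neg_of_commute_mul_self {u y : A} (h : Commute (y * y) u) :
    y * (u * y - y * u) = -((u * y - y * u) * y) := by
  have : y * y * u = u * (y * y) := h.eq
  simp only [mul_sub, sub_mul, ← mul_assoc, this]
  noncomm_ring

/-- The key identity is `(m - n) * p = p * (m + n)`. -/
theorem eq_zero_of_add_eq_zero_of_commute_of_anticommute (h2 : (2 : K) ≠ 0) {p m n : A}
    (hp : IsUnit p) (hm : Commute p m) (hn : p * n = -(n * p)) (h : m + n = 0) :
    m = 0 ∧ n = 0 := by
  have hsub : m - n = 0 := by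
    apply hp.mul_right_cancel
    rw [zero_mul, sub_mul, ← hm.eq, sub_eq_add_neg, ← hn, ← mul_add, h, mul_zero]
  have hm2 : (2 : K) • m = 0 := by
    rw [two_smul]
    nth_rewrite 2 [sub_eq_zero.mp hsub]
    exact h
  have hm0 : m = 0 := (smul_eq_zero.mp hm2).resolve_left h2
  exact ⟨hm0, by rwa [hm0, zero_add] at h⟩

theorem smul_one_add_smul_eq_zero [Nontrivial A] (h2 : (2 : K) ≠ 0) {p e : A} (hp : IsUnit p)
    (he : e ≠ 0) (hpe : p * e = -(e * p)) {a b : K} (h : a • (1 : A) + b • e = 0) :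
    a = 0 ∧ b = 0 := by
  obtain ⟨ha, hb⟩ := eq_zero_of_add_eq_zero_of_commute_of_anticommute h2 hp
    ((Commute.one_right p).smul_right a) (by rw [mul_smul_comm, smul_mul_assoc, hpe, smul_neg]) h
  exact ⟨(smul_eq_zero.mp ha).resolve_right one_ne_zero, (smul_eq_zero.mp hb).resolve_right he⟩

end AnticommutingElements

namespace QuaternionAlgebra

open Quaternion

section CommRing

variable {R : Type*} [CommRing R] {c₁ c₃ : R}

theorem re_commutator (a b : ℍ[R,c₁,0,c₃]) : (a * b - b * a).re = 0 := by
  simp only [re_sub, re_mul]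
  ring

theorem mul_self_eq_coe_of_re_eq_zero {a : ℍ[R,c₁,0,c₃]} (ha : a.re = 0) :
    a * a = ↑(-(a * star a).re) := by
  have hstar : star a = -a := by ext <;> simp [ha]
  rw [coe_neg, ← mul_star_eq_coe, hstar, mul_neg, neg_neg]

end CommRing

section Field

variable {K : Type*} [Field K] {c₁ c₃ : K}

theorem eq_coe_re_of_commute_i_of_commute_j (h2 : (2 : K) ≠ 0) (hc₁ : c₁ ≠ 0)
    {x : ℍ[K,c₁,0,c₃]} (hi : Commute (Basis.self K).i x) (hj : Commute (Basis.self K).j x) :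
    x = ↑x.re := by
  have hiJ := congrArg imJ hi.eq
  have hiK := congrArg imK hi.eq
  have hjK := congrArg imK hj.eq
  simp only [Basis.i_self, Basis.j_self, imJ_mul, imK_mul, zero_mul, mul_zero, one_mul, mul_one,
    zero_add, add_zero, sub_zero, zero_sub] at hiJ hiK hjK
  have eq_zero_of_eq_neg : ∀ a : K, a = -a → a = 0 := fun a ha =>
    (mul_eq_zero.mp (show (2 : K) * a = 0 by linear_combination ha)).resolve_left h2
  ext
  · rfl
  · exact eq_zero_of_eq_neg _ hjK.symm
  · exact eq_zero_of_eq_neg _ hiK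
  · exact (mul_eq_zero.mp (eq_zero_of_eq_neg _ hiJ)).resolve_left hc₁

end Field

theorem exists_not_commute_of_mul_self_eq_neg_one {K : Type*} [Field K] [LinearOrder K]
    [IsStrictOrderedRing K] {c₁ c₃ : K} (hc₁ : c₁ ≠ 0) {y : ℍ[K,c₁,0,c₃]} (hy : y * y = -1) :
    ∃ u, ¬Commute u y := by
  by_contra! h
  have hre := eq_coe_re_of_commute_i_of_commute_j two_ne_zero hc₁ (h _) (h _)
  rw [hre, ← coe_mul, ← coe_one, ← coe_neg] at hy
  nlinarith [mul_self_nonneg y.re, coe_injective hy]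

namespace Basis

variable {K A : Type*} [Field K] [Ring A] [Algebra K A] [Nontrivial A] {c₁ c₃ : K}

theorem liftHom_injective (h2 : (2 : K) ≠ 0) (hc₁ : c₁ ≠ 0) (hc₃ : c₃ ≠ 0)
    (q : Basis A c₁ 0 c₃) : Function.Injective q.liftHom := by
  have hi : IsUnit q.i := isUnit_of_mul_self_eq_smul_one hc₁ (by rw [q.i_mul_i, zero_smul, add_zero])
  have hj : IsUnit q.j := isUnit_of_mul_self_eq_smul_one hc₃ q.j_mul_j
  have hij : q.i * q.j = -(q.j * q.i) := by rw [q.j_mul_i, zero_smul, zero_sub, neg_neg, q.i_mul_j]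
  rw [injective_iff_map_eq_zero]
  intro x hx
  change algebraMap K A x.re + x.imI • q.i + x.imJ • q.j + x.imK • q.k = 0 at hx
  obtain ⟨heven, hodd⟩ := eq_zero_of_add_eq_zero_of_commute_of_anticommute
    (m := x.re • 1 + x.imJ • q.j) (n := x.imI • q.i + x.imK • q.k) h2 hj
    (((Commute.one_right _).smul_right _).add_right ((Commute.refl _).smul_right _))
    (by
      simp only [mul_add, add_mul, mul_smul_comm, smul_mul_assoc, j_mul_i, j_mul_k, i_mul_j,
        k_mul_j, zero_smul, zero_sub, zero_mul, smul_neg, neg_add_rev]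
      abel)
    (by rw [← hx, Algebra.algebraMap_eq_smul_one]; abel)
  obtain ⟨hre, himJ⟩ := smul_one_add_smul_eq_zero h2 hi hj.ne_zero hij heven
  have hodd' : x.imI • (1 : A) + x.imK • q.j = 0 := by
    apply hi.mul_left_cancel
    rw [mul_zero, ← hodd, mul_add, mul_smul_comm, mul_smul_comm, mul_one, q.i_mul_j]
  obtain ⟨himI, himK⟩ := smul_one_add_smul_eq_zero h2 hi hj.ne_zero hij hodd'
  ext <;> assumption

theorem liftHom_bijective (h2 : (2 : K) ≠ 0) (hc₁ : c₁ ≠ 0) (hc₃ : c₃ ≠ 0)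
    (hA : Module.finrank K A = 4) (q : Basis A c₁ 0 c₃) : Function.Bijective q.liftHom := by
  have : FiniteDimensional K A := Module.finite_of_finrank_pos (by omega)
  have hinj := q.liftHom_injective h2 hc₁ hc₃
  refine ⟨hinj, ?_⟩
  exact (LinearMap.injective_iff_surjective_of_finrank_eq_finrank (f := q.liftHom.toLinearMap)
    (by rw [hA, finrank_eq_four])).mp hinj

end Basis

end QuaternionAlgebra

open Quaternion in
theorem quaternion_iso_gamma_neg_one_general (α β : ℚ) (hα : α ≠ 0)
    (hdiv : ∀ x : ℍ[ℚ, α, β], x ≠ 0 → IsUnit x)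
    (hsq : ∃ y : ℍ[ℚ, α, β], y ^ 2 = -1) :
    ∃ γ : ℚ, γ ≠ 0 ∧ Nonempty (ℍ[ℚ, α, β] ≃ₐ[ℚ] ℍ[ℚ, γ, -1]) := by
  obtain ⟨y, hy⟩ := hsq
  rw [sq] at hy
  obtain ⟨u, hu⟩ := QuaternionAlgebra.exists_not_commute_of_mul_self_eq_neg_one hα hy
  set z := u * y - y * u
  have hz : z ≠ 0 := sub_ne_zero.mpr hu
  set γ := -(z * star z).re
  have hzz : z * z = γ • 1 := by
    rw [QuaternionAlgebra.mul_self_eq_coe_of_re_eq_zero (QuaternionAlgebra.re_commutator u y),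
      ← QuaternionAlgebra.coe_algebraMap, Algebra.algebraMap_eq_smul_one]
  have hγ : γ ≠ 0 := by
    rintro hγ
    rw [hγ, zero_smul] at hzz
    exact hz ((hdiv z hz).mul_left_cancel (hzz.trans (mul_zero z).symm))
  have hyz : y * z = -(z * y) :=
    mul_commutator_eq_neg_of_commute_mul_self (by rw [hy]; exact Commute.neg_one_left u)
  let q : QuaternionAlgebra.Basis ℍ[ℚ, α, β] γ 0 (-1) :=
    { i := z, j := y, k := z * y
      i_mul_i := by rw [hzz, zero_smul, add_zero]
      j_mul_j := by rw [hy, neg_one_smul]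
      i_mul_j := rfl
      j_mul_i := by rw [hyz, zero_smul, zero_sub] }
  have hq := q.liftHom_bijective two_ne_zero hγ (neg_ne_zero.mpr one_ne_zero)
    (QuaternionAlgebra.finrank_eq_four _ _ _)
  exact ⟨γ, hγ, ⟨(AlgEquiv.ofBijective q.liftHom hq).symm⟩⟩

open Quaternion in
/-- If `-1` has a square root in the quaternion division algebra `D = (α,β)_ℚ`, then
`D ≅ (γ,-1)_ℚ` for some nonzero rational `γ`. -/
theorem quaternion_iso_gamma_neg_one (α β : ℚ) (hα : α ≠ 0) (hβ : β ≠ 0)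
    (hdiv : ∀ x : ℍ[ℚ, α, β], x ≠ 0 → IsUnit x)
    (hsq : ∃ y : ℍ[ℚ, α, β], y ^ 2 = -1) :
    ∃ γ : ℚ, γ ≠ 0 ∧ Nonempty (ℍ[ℚ, α, β] ≃ₐ[ℚ] ℍ[ℚ, γ, -1]) :=
  quaternion_iso_gamma_neg_one_general α β hα hdiv hsq
end

section
/- Let p be an odd prime and let D = (α,β)_ℚ be a quaternion algebra with α, β p-adic units. Then D is isomorphic over ℚ to a quaternion algebra (α',β)_ℚ where α' is a p-adic unit that is a square in ℚ_p. -/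
/-!
Pick `m, n` with `m² - β n² ≡ α (mod p)`: every residue has the form `x² - β y²` when `β ≢ 0`.
The element `t = m² - β n²` is a norm from `ℚ(√β)`, so replacing `i` by `m i + n k` shows
`(α, β) ≅ (α t, β)`. As `t ≡ α`, the unit `α t` is congruent to the square `α²` mod `p`,
hence a square in `ℚ_p` by Hensel's lemma.
-/

open Polynomial Quaternion

theorem FiniteField.exists_sq_sub_mul_sq_eq {F : Type*} [Field F] [Fintype F]
    (hF : ringChar F ≠ 2) (a : F) {b : F} (hb : b ≠ 0) :
    ∃ x y : F, x ^ 2 - b * y ^ 2 = a := by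
  obtain ⟨x, y, hxy⟩ := exists_root_sum_quadratic (f := X ^ 2 - C a) (g := -(C b * X ^ 2))
    (degree_X_pow_sub_C two_pos a) (by rw [degree_neg, degree_C_mul_X_pow 2 hb]; rfl)
    (odd_card_of_char_ne_two hF)
  simp only [eval_sub, eval_pow, eval_X, eval_C, eval_neg, eval_mul] at hxy
  exact ⟨x, y, by linear_combination hxy⟩

section Padic

variable {p : ℕ} [Fact p.Prime]

theorem PadicInt.exists_norm_sq_sub_mul_sq_sub_lt_one (hp : p ≠ 2) (a b : ℤ_[p])
    (hb : ‖b‖ = 1) : ∃ m n : ℕ, ‖(m : ℤ_[p]) ^ 2 - b * n ^ 2 - a‖ < 1 := by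
  have hb0 : toZMod b ≠ 0 := by
    rw [ne_eq, ← RingHom.mem_ker, ker_toZMod, IsLocalRing.mem_maximalIdeal, mem_nonunits, hb]
    exact lt_irrefl 1
  obtain ⟨x, y, hxy⟩ :=
    FiniteField.exists_sq_sub_mul_sq_eq (by rwa [ZMod.ringChar_zmod_n]) (toZMod a) hb0
  refine ⟨x.val, y.val, ?_⟩
  rw [← mem_nonunits, ← IsLocalRing.mem_maximalIdeal, ← ker_toZMod, RingHom.mem_ker]
  simp [hxy]

theorem PadicInt.exists_sq_eq_of_norm_sub_one_lt (hp : p ≠ 2) {z : ℤ_[p]}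
    (hz : ‖z - 1‖ < 1) : ∃ s, s ^ 2 = z := by
  have h2 : ‖(2 : ℤ_[p])‖ = 1 := by
    exact_mod_cast norm_natCast_eq_one_iff.2 ((Nat.coprime_primes Fact.out Nat.prime_two).2 hp)
  have hnorm : ‖(X ^ 2 - C z).aeval (1 : ℤ_[p])‖ <
      ‖(X ^ 2 - C z).derivative.aeval (1 : ℤ_[p])‖ ^ 2 := by
    simpa [norm_sub_rev, one_add_one_eq_two, h2] using hz
  obtain ⟨s, hs, -⟩ := hensels_lemma hnorm
  exact ⟨s, by simpa [sub_eq_zero] using hs⟩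

theorem Padic.exists_sq_eq_of_norm_sub_sq_lt (hp : p ≠ 2) {u a : ℚ_[p]}
    (h : ‖u - a ^ 2‖ < ‖a ^ 2‖) : ∃ s, s ^ 2 = u := by
  have ha : a ^ 2 ≠ 0 := norm_pos_iff.1 ((norm_nonneg _).trans_lt h)
  have hz : ‖u / a ^ 2 - 1‖ < 1 := by
    rwa [div_sub_one ha, norm_div, div_lt_one (norm_pos_iff.2 ha)]
  have hz1 : ‖u / a ^ 2‖ = 1 :=
    (norm_eq_of_norm_sub_lt_right (by rwa [norm_one])).trans norm_one
  obtain ⟨s, hs⟩ := PadicInt.exists_sq_eq_of_norm_sub_one_lt hp (z := ⟨u / a ^ 2, hz1.le⟩) hz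
  refine ⟨a * s, ?_⟩
  rw [mul_pow, ← PadicInt.coe_pow, hs]
  exact mul_div_cancel₀ _ ha

end Padic

namespace QuaternionAlgebra

def basisOfNorm {R : Type*} [CommRing R] {c₁ c₂ d : R} (x y : R)
    (h : d = c₁ * (x ^ 2 - c₂ * y ^ 2)) : Basis ℍ[R, c₁, c₂] d 0 c₂ where
  i := ⟨0, x, 0, y⟩
  j := ⟨0, 0, 1, 0⟩
  k := ⟨0, c₂ * y, 0, x⟩
  i_mul_i := by subst h; ext <;> simp <;> ring
  j_mul_j := by ext <;> simp
  i_mul_j := by ext <;> simp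
  j_mul_i := by ext <;> simp

theorem nonempty_algEquiv_mul_norm {K : Type*} [Field K] (c₁ c₂ x y : K)
    (ht : x ^ 2 - c₂ * y ^ 2 ≠ 0) :
    Nonempty (ℍ[K, c₁, c₂] ≃ₐ[K] ℍ[K, c₁ * (x ^ 2 - c₂ * y ^ 2), c₂]) := by
  set t := x ^ 2 - c₂ * y ^ 2 with ht_def
  -- `(x - y √c₂) / t` has norm `1 / t`, so the same construction runs backwards.
  have hinv : c₁ = c₁ * t * ((x / t) ^ 2 - c₂ * (-(y / t)) ^ 2) := by
    field_simp
    rfl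
  let f := (basisOfNorm (c₁ := c₁) (c₂ := c₂) x y rfl).liftHom
  let g := (basisOfNorm (c₁ := c₁ * t) (c₂ := c₂) (x / t) (-(y / t)) hinv).liftHom
  refine ⟨AlgEquiv.ofAlgHom g f ?_ ?_⟩ <;> ext <;>
    simp [f, g, basisOfNorm, Basis.lift, Basis.self] <;> field_simp <;> rw [ht_def] <;> ring

end QuaternionAlgebra

open Quaternion in
/-- For an odd prime `p` and `p`-adic units `α, β ∈ ℚ`, the quaternion algebra
`(α,β)_ℚ` is isomorphic over `ℚ` to some `(α',β)_ℚ` where `α'` is a `p`-adic unit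
that is a square in `ℚ_p`. -/
theorem quaternion_iso_with_square_alpha (p : ℕ) [Fact p.Prime] (hp : p ≠ 2)
    (α β : ℚ) (hα : ‖(α : ℚ_[p])‖ = 1) (hβ : ‖(β : ℚ_[p])‖ = 1) :
    ∃ α' : ℚ, ‖(α' : ℚ_[p])‖ = 1 ∧ (∃ s : ℚ_[p], s ^ 2 = (α' : ℚ_[p])) ∧
      Nonempty (ℍ[ℚ, α, β] ≃ₐ[ℚ] ℍ[ℚ, α', β]) := by
  obtain ⟨m, n, hmn⟩ :=
    PadicInt.exists_norm_sq_sub_mul_sq_sub_lt_one hp ⟨α, hα.le⟩ ⟨β, hβ.le⟩ hβ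
  set t : ℚ := m ^ 2 - β * n ^ 2
  have htα : ‖(t : ℚ_[p]) - α‖ < 1 := by
    rw [PadicInt.norm_def] at hmn
    push_cast [t] at hmn ⊢
    exact hmn
  have ht : t ≠ 0 := by
    intro h
    simp [h, hα] at htα
  have hsq : ‖((α * t : ℚ) : ℚ_[p]) - (α : ℚ_[p]) ^ 2‖ < ‖(α : ℚ_[p]) ^ 2‖ := by
    rwa [Rat.cast_mul, sq, ← mul_sub, norm_mul, norm_mul, hα, one_mul, one_mul]
  refine ⟨α * t, ?_, Padic.exists_sq_eq_of_norm_sub_sq_lt hp hsq,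
    QuaternionAlgebra.nonempty_algEquiv_mul_norm α β m n ht⟩
  rw [Padic.norm_eq_of_norm_sub_lt_right hsq, norm_pow, hα, one_pow]
end

section
/- With D = (α,β)_ℚ a quaternion division algebra, p an odd prime with α, β p-adic units and α a square in ℚ_p: the torus T = {x₁ + x₂e₂ ∈ D : x₁² - αx₂² = 1} is dense in T_p = {x₁ + x₂e₂ ∈ D_p : x₁² - αx₂² = 1}, which under the standard isomorphism D_p ≅ M₂(ℚ_p) is the diagonal torus of SL₂(ℚ_p). -/
/-!
Since `D` is a division algebra, `α` is not a square in `ℚ`, so `1 - α t² ≠ 0` for every rational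
`t`. The conic `x₁² - α x₂² = 1` is rational: lines through `(∓1, 0)` parametrize it by rational
functions of the slope, defined on all of `ℚ` and continuous near the slope of any `ℚ_p`-point.
Rational slopes are dense in `ℚ_p`, so their images, which are rational points of `T`, accumulate
at every point of `T_p`.
-/

open Quaternion

/-- The `p`-adic topology on `D_p`, viewed as a 4-dimensional `ℚ_p`-vector space. -/
noncomputable instance quatTopology (p : ℕ) [Fact p.Prime] (c₁ c₂ : ℚ_[p]) :
    TopologicalSpace ℍ[ℚ_[p], c₁, c₂] :=
  TopologicalSpace.induced (QuaternionAlgebra.equivTuple c₁ 0 c₂) inferInstance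

theorem QuaternionAlgebra.not_isSquare_of_forall_isUnit {R : Type*} [CommRing R] [Nontrivial R]
    {a b : R} (hdiv : ∀ x : ℍ[R, a, b], x ≠ 0 → IsUnit x) : ¬IsSquare a := by
  rintro ⟨r, rfl⟩
  -- `(r - i)(r + i) = r² - i² = 0`
  have hne : (⟨r, -1, 0, 0⟩ : ℍ[R, r * r, b]) ≠ 0 := fun h ↦ by
    simpa using congrArg QuaternionAlgebra.imI h
  have hprod : (⟨r, -1, 0, 0⟩ : ℍ[R, r * r, b]) * ⟨r, 1, 0, 0⟩ = 0 := by
    ext <;> simp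
  simpa using congrArg QuaternionAlgebra.imI ((hdiv _ hne).mul_right_eq_zero.mp hprod)

section Conic

variable {K : Type*} [Field K]

/-- Lines through `(-σ, 0)` meet the conic `X² - a Y² = 1` again at `conicParam a σ u`;
the line through `(X, Y)` has parameter `u = σ Y / (X + σ)`. -/
def conicParam (a σ u : K) : K × K :=
  (σ * (1 + a * u ^ 2) / (1 - a * u ^ 2), 2 * u / (1 - a * u ^ 2))

theorem conicParam_mem {a σ u : K} (hσ : σ ^ 2 = 1) (hu : 1 - a * u ^ 2 ≠ 0) :
    (conicParam a σ u).1 ^ 2 - a * (conicParam a σ u).2 ^ 2 = 1 := by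
  simp only [conicParam]
  field_simp
  linear_combination (1 + a * u ^ 2) ^ 2 * hσ

theorem one_sub_mul_sq_slope {a σ X Y : K} (hσ : σ ^ 2 = 1) (hXY : X ^ 2 - a * Y ^ 2 = 1)
    (hX : X + σ ≠ 0) : 1 - a * (σ * Y / (X + σ)) ^ 2 = 2 * σ / (X + σ) := by
  field_simp
  linear_combination hXY - (a * Y ^ 2 + 1) * hσ

theorem conicParam_slope {a σ X Y : K} (hσ : σ ^ 2 = 1) (h2 : (2 : K) ≠ 0)
    (hXY : X ^ 2 - a * Y ^ 2 = 1) (hX : X + σ ≠ 0) :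
    conicParam a σ (σ * Y / (X + σ)) = (X, Y) := by
  have hσ0 : σ ≠ 0 := by rintro rfl; simp at hσ
  simp only [conicParam, one_sub_mul_sq_slope hσ hXY hX]
  ext <;> field_simp
  linear_combination (1 + a * Y ^ 2) * hσ - hXY

theorem continuousAt_conicParam [TopologicalSpace K] [IsTopologicalDivisionRing K]
    {a σ u : K} (hu : 1 - a * u ^ 2 ≠ 0) : ContinuousAt (conicParam a σ) u :=
  .prodMk (.div (by fun_prop) (by fun_prop) hu) (.div (by fun_prop) (by fun_prop) hu)

end Conic

theorem mem_closure_ratPoints_of_conic {L : Type*} [Field L] [CharZero L] [TopologicalSpace L]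
    [IsTopologicalDivisionRing L] (hdense : DenseRange ((↑) : ℚ → L)) {a : ℚ} (ha : ¬IsSquare a)
    {X Y : L} (hXY : X ^ 2 - a * Y ^ 2 = 1) :
    (X, Y) ∈ closure (Prod.map (↑) (↑) '' {q : ℚ × ℚ | q.1 ^ 2 - a * q.2 ^ 2 = 1}) := by
  have hden (t : ℚ) : 1 - a * t ^ 2 ≠ 0 := by
    intro h
    have ht : t ≠ 0 := by rintro rfl; simp at h
    exact ha ⟨t⁻¹, by field_simp; linear_combination -h⟩
  obtain ⟨σ, hσ, hX⟩ : ∃ σ : ℚ, σ ^ 2 = 1 ∧ X + σ ≠ 0 := by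
    by_cases h : X + 1 = 0
    · refine ⟨-1, by norm_num, ?_⟩
      rw [eq_neg_of_add_eq_zero_left h]
      norm_num
    · exact ⟨1, by norm_num, by exact_mod_cast h⟩
  have hσL : (σ : L) ^ 2 = 1 := by exact_mod_cast hσ
  set u := (σ : L) * Y / (X + σ)
  have hu : 1 - (a : L) * u ^ 2 ≠ 0 := by
    rw [one_sub_mul_sq_slope hσL hXY hX]
    exact div_ne_zero (mul_ne_zero two_ne_zero (ne_zero_pow two_ne_zero (hσL ▸ one_ne_zero))) hX
  rw [← conicParam_slope hσL two_ne_zero hXY hX]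
  refine closure_mono ?_ (mem_closure_image (continuousAt_conicParam hu) (hdense u))
  rintro _ ⟨_, ⟨t, rfl⟩, rfl⟩
  refine ⟨conicParam a σ t, conicParam_mem hσ (hden t), ?_⟩
  simp [conicParam]

theorem continuous_mk_re_imI (p : ℕ) [Fact p.Prime] (c₁ c₂ : ℚ_[p]) :
    Continuous fun x : ℚ_[p] × ℚ_[p] ↦ (⟨x.1, x.2, 0, 0⟩ : ℍ[ℚ_[p], c₁, c₂]) := by
  refine continuous_induced_rng.mpr (continuous_pi fun i ↦ ?_)
  fin_cases i <;> simp [QuaternionAlgebra.equivTuple_apply] <;> fun_prop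

theorem torus_dense_general (p : ℕ) [Fact p.Prime]
    (α β : ℚ)
    (hdiv : ∀ x : ℍ[ℚ, α, β], x ≠ 0 → IsUnit x)
    (ι : ℍ[ℚ, α, β] → ℍ[ℚ_[p], (α : ℚ_[p]), (β : ℚ_[p])])
    (hι : ∀ x, ι x = ⟨(x.re : ℚ_[p]), (x.imI : ℚ_[p]), (x.imJ : ℚ_[p]), (x.imK : ℚ_[p])⟩)
    (y : ℍ[ℚ_[p], (α : ℚ_[p]), (β : ℚ_[p])])
    (hyT : y.imJ = 0 ∧ y.imK = 0 ∧ y.re ^ 2 - (α : ℚ_[p]) * y.imI ^ 2 = 1) :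
    y ∈ closure (ι '' {x : ℍ[ℚ, α, β] |
        x.imJ = 0 ∧ x.imK = 0 ∧ x.re ^ 2 - α * x.imI ^ 2 = 1}) := by
  obtain ⟨hJ, hK, hXY⟩ := hyT
  have hy : y = ⟨y.re, y.imI, 0, 0⟩ := by ext <;> simp [hJ, hK]
  have hrat := mem_closure_ratPoints_of_conic (Padic.denseRange_ratCast p)
    (QuaternionAlgebra.not_isSquare_of_forall_isUnit hdiv) hXY
  rw [hy]
  refine map_mem_closure (x := (y.re, y.imI)) (continuous_mk_re_imI p _ _) hrat ?_
  rintro _ ⟨q, hq, rfl⟩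
  exact ⟨⟨q.1, q.2, 0, 0⟩, ⟨rfl, rfl, hq⟩, by simp [hι]⟩

/-- The torus `T = {x₁ + x₂ e₂ ∈ D : x₁² - α x₂² = 1}` is dense in the corresponding
torus `T_p ⊆ D_p` (which is the diagonal torus of `SL₂(ℚ_p)` under the standard
isomorphism), for `D = (α,β)_ℚ` a division algebra, `p` an odd prime with `α, β`
`p`-adic units and `α` a square in `ℚ_p`. -/
theorem torus_dense (p : ℕ) [Fact p.Prime] (hp : p ≠ 2)
    (α β : ℚ) (hα : ‖(α : ℚ_[p])‖ = 1) (hβ : ‖(β : ℚ_[p])‖ = 1)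
    (hsq : ∃ s : ℚ_[p], s ^ 2 = (α : ℚ_[p]))
    (hdiv : ∀ x : ℍ[ℚ, α, β], x ≠ 0 → IsUnit x)
    (ι : ℍ[ℚ, α, β] → ℍ[ℚ_[p], (α : ℚ_[p]), (β : ℚ_[p])])
    (hι : ∀ x, ι x = ⟨(x.re : ℚ_[p]), (x.imI : ℚ_[p]), (x.imJ : ℚ_[p]), (x.imK : ℚ_[p])⟩)
    (y : ℍ[ℚ_[p], (α : ℚ_[p]), (β : ℚ_[p])])
    (hyT : y.imJ = 0 ∧ y.imK = 0 ∧ y.re ^ 2 - (α : ℚ_[p]) * y.imI ^ 2 = 1) :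
    y ∈ closure (ι '' {x : ℍ[ℚ, α, β] |
        x.imJ = 0 ∧ x.imK = 0 ∧ x.re ^ 2 - α * x.imI ^ 2 = 1}) :=
  torus_dense_general p α β hdiv ι hι y hyT
end

section
/- Let l be a prime with l ≡ 1 (mod 4) and let α be a negative integer that is not a quadratic residue mod l. Then the quadratic form ⟨1, α, l, αl⟩ (i.e., x₁² + αx₂² + lx₃² + αlx₄²) is anisotropic over ℚ_l, and hence anisotropic over ℚ. Consequently -1 has no square root in the quaternion division algebra (α,-l)_ℚ. -/
/-!
Since `-1` is a square mod `l`, `-α` is a non-residue too, so the binary form `u² + αv²` has no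
nontrivial zero mod `l`; scaling by `v` when `‖u‖ ≤ ‖v‖` (and the ultrametric inequality
otherwise) gives `‖u² + αv²‖ = max ‖u‖ ‖v‖ ^ 2` in `ℚ_l`. Thus `‖x₁² + αx₂²‖` is an even
power of `l` while `‖l (x₃² + αx₄²)‖` is an odd one, and the two can only cancel when all `xᵢ`
vanish. Anisotropy over `ℚ` follows by embedding `ℚ` in `ℚ_l`.

A square root `y` of `-1` in `(α, -l)_ℚ` is a pure quaternion, as `ℚ` is ordered, and its
coordinates satisfy `1 + αb² - lc² + αld² = 0`. By Hensel's lemma `-1 = s²` in `ℚ_l`, so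
`(1, b, sc, d)` is a nontrivial zero of `⟨1, α, l, αl⟩` over `ℚ_l`.
-/

open Polynomial

namespace PadicInt

variable {p : ℕ} [Fact p.Prime]

theorem toZMod_ne_zero_iff_isUnit (x : ℤ_[p]) : toZMod x ≠ 0 ↔ IsUnit x := by
  rw [toZMod_eq_residueField_comp_residue, ← IsLocalRing.residue_ne_zero_iff_isUnit]
  simp

theorem isSquare_of_isSquare_toZMod (hp : p ≠ 2) {x : ℤ_[p]} (hx : IsUnit x)
    (hsq : IsSquare (toZMod x)) : IsSquare x := by
  obtain ⟨t, ht⟩ := hsq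
  obtain ⟨a, rfl⟩ : ∃ a : ℤ_[p], toZMod a = t := ⟨(t.val : ℤ_[p]), by simp⟩
  have h2 : IsUnit (2 : ℤ_[p]) := by
    rw [← toZMod_ne_zero_iff_isUnit, map_ofNat]
    exact Ring.two_ne_zero ((ZMod.ringChar_zmod_n p).symm ▸ hp)
  have ha : IsUnit a := by
    rw [← toZMod_ne_zero_iff_isUnit] at hx ⊢
    rintro h
    rw [h, mul_zero] at ht
    exact hx ht
  have hval : ‖(X ^ 2 - C x).aeval a‖ < 1 := by
    rw [← not_isUnit_iff, ← toZMod_ne_zero_iff_isUnit, not_not]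
    simp [ht, sq]
  have hder : ‖(X ^ 2 - C x).derivative.aeval a‖ = 1 := by
    rw [← isUnit_iff]
    simpa [one_add_one_eq_two] using h2.mul ha
  obtain ⟨z, hz, -⟩ := hensels_lemma (F := X ^ 2 - C x) (a := a) (by rwa [hder, one_pow])
  simp only [aeval_sub, aeval_X_pow, aeval_C, Algebra.algebraMap_self, RingHom.id_apply] at hz
  exact ⟨z, by linear_combination -hz⟩

end PadicInt

namespace Padic

variable {p : ℕ} [Fact p.Prime]

theorem isSquare_neg_one (hp : p % 4 = 1) : IsSquare (-1 : ℚ_[p]) := by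
  have hZ : IsSquare (-1 : ℤ_[p]) :=
    PadicInt.isSquare_of_isSquare_toZMod (by omega) isUnit_one.neg
      (by simpa using ZMod.exists_sq_eq_neg_one_iff.mpr (by omega))
  simpa using hZ.map (PadicInt.Coe.ringHom (p := p))

theorem valuation_eq_of_norm_eq {x y : ℚ_[p]} (hx : x ≠ 0) (hy : y ≠ 0) (h : ‖x‖ = ‖y‖) :
    x.valuation = y.valuation := by
  rw [norm_eq_zpow_neg_valuation hx, norm_eq_zpow_neg_valuation hy] at h
  have hp : (1 : ℝ) < p := by exact_mod_cast (Fact.out : p.Prime).one_lt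
  exact neg_inj.mp (zpow_right_injective₀ (by positivity) hp.ne' h)

theorem eq_zero_of_norm_sq_eq_inv_mul_norm_sq {a b : ℚ_[p]}
    (h : ‖a‖ ^ 2 = (p : ℝ)⁻¹ * ‖b‖ ^ 2) : b = 0 := by
  by_contra hb
  have hp : (p : ℚ_[p]) ≠ 0 := by exact_mod_cast (Fact.out : p.Prime).ne_zero
  have ha : a ≠ 0 := by rintro rfl; simp_all
  have hv := valuation_eq_of_norm_eq (pow_ne_zero 2 ha) (mul_ne_zero hp (pow_ne_zero 2 hb))
    (by simpa [norm_p] using h)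
  rw [valuation_pow, valuation_mul hp (pow_ne_zero 2 hb), valuation_pow, valuation_p] at hv
  omega

variable {α : ℤ}

theorem norm_sq_add_intCast_eq_one (hα : ¬IsSquare (-(α : ZMod p))) {t : ℚ_[p]} (ht : ‖t‖ ≤ 1) :
    ‖t ^ 2 + α‖ = 1 := by
  obtain ⟨t, rfl⟩ : ∃ t' : ℤ_[p], (t' : ℚ_[p]) = t := ⟨⟨t, ht⟩, rfl⟩
  rw [show (t : ℚ_[p]) ^ 2 + α = ((t ^ 2 + α : ℤ_[p]) : ℚ_[p]) by push_cast; rfl,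
    PadicInt.padic_norm_e_of_padicInt, ← PadicInt.isUnit_iff,
    ← PadicInt.toZMod_ne_zero_iff_isUnit]
  intro h
  simp only [map_add, map_pow, map_intCast] at h
  exact hα ⟨PadicInt.toZMod t, by linear_combination -h⟩

theorem norm_sq_add_mul_sq (hα : ¬IsSquare (-(α : ZMod p))) (u v : ℚ_[p]) :
    ‖u ^ 2 + α * v ^ 2‖ = max ‖u‖ ‖v‖ ^ 2 := by
  rcases le_or_gt ‖u‖ ‖v‖ with huv | hvu
  · rcases eq_or_ne v 0 with rfl | hv
    · simp_all
    have ht : ‖u / v‖ ≤ 1 := by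
      rw [norm_div]; exact div_le_one_of_le₀ huv (norm_nonneg _)
    calc ‖u ^ 2 + α * v ^ 2‖ = ‖v ^ 2 * ((u / v) ^ 2 + α)‖ := by congr 1; field_simp
      _ = max ‖u‖ ‖v‖ ^ 2 := by
        rw [norm_mul, norm_sq_add_intCast_eq_one hα ht, mul_one, norm_pow, max_eq_right huv]
  · have hα1 : ‖(α : ℚ_[p])‖ = 1 := by
      simpa using norm_sq_add_intCast_eq_one hα (t := 0) (by simp)
    have hlt : ‖(α : ℚ_[p]) * v ^ 2‖ < ‖u ^ 2‖ := by
      rw [norm_mul, hα1, one_mul, norm_pow, norm_pow]; gcongr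
    rw [add_eq_max_of_ne hlt.ne', max_eq_left hlt.le, norm_pow, max_eq_left hvu.le]

theorem eq_zero_of_sq_add_mul_sq_add_p_mul_eq_zero (hα : ¬IsSquare (-(α : ZMod p)))
    {x₁ x₂ x₃ x₄ : ℚ_[p]} (h : x₁ ^ 2 + α * x₂ ^ 2 + p * (x₃ ^ 2 + α * x₄ ^ 2) = 0) :
    x₁ = 0 ∧ x₂ = 0 ∧ x₃ = 0 ∧ x₄ = 0 := by
  have hnorm : max ‖x₁‖ ‖x₂‖ ^ 2 = (p : ℝ)⁻¹ * max ‖x₃‖ ‖x₄‖ ^ 2 := by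
    rw [← norm_sq_add_mul_sq hα, ← norm_sq_add_mul_sq hα, ← norm_p, ← norm_mul,
      eq_neg_of_add_eq_zero_left h, norm_neg]
  have h₃₄ : max ‖x₃‖ ‖x₄‖ = 0 := by
    obtain ⟨a, ha⟩ : ∃ a, max ‖x₁‖ ‖x₂‖ = ‖a‖ := (max_choice _ _).elim (⟨x₁, ·⟩) (⟨x₂, ·⟩)
    obtain ⟨b, hb⟩ : ∃ b, max ‖x₃‖ ‖x₄‖ = ‖b‖ := (max_choice _ _).elim (⟨x₃, ·⟩) (⟨x₄, ·⟩)
    rw [ha, hb] at hnorm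
    rw [hb, eq_zero_of_norm_sq_eq_inv_mul_norm_sq hnorm, norm_zero]
  have h₁₂ : max ‖x₁‖ ‖x₂‖ = 0 := by simpa [h₃₄] using hnorm
  simpa [le_antisymm_iff, and_assoc] using And.intro h₁₂ h₃₄

end Padic

open Quaternion in
theorem QuaternionAlgebra.re_eq_zero_of_sq_eq_neg_one {R : Type*} [Field R] [LinearOrder R]
    [IsStrictOrderedRing R] {c₁ c₂ : R} {y : ℍ[R, c₁, c₂]} (hy : y ^ 2 = -1) : y.re = 0 := by
  obtain ⟨hr, hi, hj, hk⟩ := QuaternionAlgebra.ext_iff.mp (sq y ▸ hy)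
  simp only [QuaternionAlgebra.re_mul, QuaternionAlgebra.imI_mul, QuaternionAlgebra.imJ_mul,
    QuaternionAlgebra.imK_mul, QuaternionAlgebra.re_neg, QuaternionAlgebra.imI_neg,
    QuaternionAlgebra.imJ_neg, QuaternionAlgebra.imK_neg, QuaternionAlgebra.re_one,
    QuaternionAlgebra.imI_one, QuaternionAlgebra.imJ_one, QuaternionAlgebra.imK_one,
    neg_zero] at hr hi hj hk
  by_contra hre
  have h2re : 2 * y.re ≠ 0 := mul_ne_zero two_ne_zero hre
  have hI : y.imI = 0 := (mul_eq_zero.mp (by linear_combination hi)).resolve_left h2re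
  have hJ : y.imJ = 0 := (mul_eq_zero.mp (by linear_combination hj)).resolve_left h2re
  have hK : y.imK = 0 := (mul_eq_zero.mp (by linear_combination hk)).resolve_left h2re
  rw [hI, hJ, hK] at hr
  nlinarith [mul_self_nonneg y.re]

open Quaternion in
theorem anisotropic_form_no_sqrt_neg_one_general (l : ℕ) [Fact l.Prime] (hl : l % 4 = 1)
    (α : ℤ) (hαQR : ¬IsSquare ((α : ZMod l))) :
    (∀ x₁ x₂ x₃ x₄ : ℚ_[l],
        x₁ ^ 2 + (α : ℚ_[l]) * x₂ ^ 2 + (l : ℚ_[l]) * x₃ ^ 2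
          + (α : ℚ_[l]) * (l : ℚ_[l]) * x₄ ^ 2 = 0 →
        x₁ = 0 ∧ x₂ = 0 ∧ x₃ = 0 ∧ x₄ = 0) ∧
      (∀ x₁ x₂ x₃ x₄ : ℚ,
        x₁ ^ 2 + (α : ℚ) * x₂ ^ 2 + (l : ℚ) * x₃ ^ 2
          + (α : ℚ) * (l : ℚ) * x₄ ^ 2 = 0 →
        x₁ = 0 ∧ x₂ = 0 ∧ x₃ = 0 ∧ x₄ = 0) ∧
      ¬∃ y : ℍ[ℚ, (α : ℚ), (-(l : ℚ))], y ^ 2 = -1 := by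
  have hα : ¬IsSquare (-(α : ZMod l)) := fun h ↦
    hαQR (by simpa using (ZMod.exists_sq_eq_neg_one_iff.mpr (by omega)).mul h)
  have hQl : ∀ x₁ x₂ x₃ x₄ : ℚ_[l], x₁ ^ 2 + (α : ℚ_[l]) * x₂ ^ 2 + (l : ℚ_[l]) * x₃ ^ 2
      + (α : ℚ_[l]) * (l : ℚ_[l]) * x₄ ^ 2 = 0 → x₁ = 0 ∧ x₂ = 0 ∧ x₃ = 0 ∧ x₄ = 0 :=
    fun x₁ x₂ x₃ x₄ h ↦
      Padic.eq_zero_of_sq_add_mul_sq_add_p_mul_eq_zero hα (by linear_combination h)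
  refine ⟨hQl, fun x₁ x₂ x₃ x₄ h ↦ ?_, ?_⟩
  · exact_mod_cast hQl x₁ x₂ x₃ x₄ (by exact_mod_cast congrArg (Rat.cast : ℚ → ℚ_[l]) h)
  · rintro ⟨y, hy⟩
    have hre := congrArg QuaternionAlgebra.re hy
    simp only [sq, QuaternionAlgebra.re_mul, QuaternionAlgebra.re_neg, QuaternionAlgebra.re_one,
      y.re_eq_zero_of_sq_eq_neg_one hy] at hre
    obtain ⟨s, hs⟩ := Padic.isSquare_neg_one hl
    have hre_l := congrArg (Rat.cast : ℚ → ℚ_[l]) hre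
    push_cast at hre_l
    have h := hQl 1 y.imI (s * y.imJ) y.imK
      (by linear_combination hre_l - (l : ℚ_[l]) * (y.imJ : ℚ_[l]) ^ 2 * hs)
    exact one_ne_zero h.1

open Quaternion in
/-- For a prime `l ≡ 1 (mod 4)` and a negative integer `α` that is not a quadratic
residue mod `l`, the form `⟨1, α, l, αl⟩` is anisotropic over `ℚ_l`, hence over `ℚ`,
and consequently `-1` has no square root in `(α, -l)_ℚ`. -/
theorem anisotropic_form_no_sqrt_neg_one (l : ℕ) [Fact l.Prime] (hl : l % 4 = 1)
    (α : ℤ) (hαneg : α < 0) (hαQR : ¬IsSquare ((α : ZMod l))) :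
    (∀ x₁ x₂ x₃ x₄ : ℚ_[l],
        x₁ ^ 2 + (α : ℚ_[l]) * x₂ ^ 2 + (l : ℚ_[l]) * x₃ ^ 2
          + (α : ℚ_[l]) * (l : ℚ_[l]) * x₄ ^ 2 = 0 →
        x₁ = 0 ∧ x₂ = 0 ∧ x₃ = 0 ∧ x₄ = 0) ∧
      (∀ x₁ x₂ x₃ x₄ : ℚ,
        x₁ ^ 2 + (α : ℚ) * x₂ ^ 2 + (l : ℚ) * x₃ ^ 2
          + (α : ℚ) * (l : ℚ) * x₄ ^ 2 = 0 →
        x₁ = 0 ∧ x₂ = 0 ∧ x₃ = 0 ∧ x₄ = 0) ∧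
      ¬∃ y : ℍ[ℚ, (α : ℚ), (-(l : ℚ))], y ^ 2 = -1 :=
  anisotropic_form_no_sqrt_neg_one_general l hl α hαQR
end

section
/- The quadratic form x₁² - 2x₂² + 5x₃² - 10x₄² is anisotropic over ℚ (equivalently, -1 has no square root in the quaternion algebra (-2,-5)_ℚ, which is a division algebra). -/
/-!
The form `x₁² - 2x₂² ± 5x₃² - 10x₄²` is `⟨1, -2⟩ ⊥ 5⟨±1, -2⟩`, and both binary forms `⟨1, -2⟩` and
`⟨-1, -2⟩` are anisotropic modulo `5` (neither `2` nor `-2` is a square mod `5`). Reducing an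
integral zero mod `5` twice shows that all its coordinates are divisible by `5`, so by infinite
descent the form is anisotropic over `ℤ`, hence over `ℚ`. The sign `+` is the first claim. A
square root of `-1` in `(-2,-5)_ℚ` must be a pure quaternion `v` with `v² = -2a² - 5b² - 10c² = -1`,
a zero `(1, a, b, c)` of the form with the sign `-`. Finally the norm form `⟨1, 2, 5, 10⟩` is
positive definite, so `x * star x` is a nonzero scalar for every `x ≠ 0`.
-/

open Quaternion

def BinaryAnisotropic (R : Type*) [CommRing R] (a b : R) : Prop :=
  ∀ x y : R, a * x ^ 2 + b * y ^ 2 = 0 → x = 0 ∧ y = 0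

def QuaternaryAnisotropic (R : Type*) [CommRing R] (a b c d : R) : Prop :=
  ∀ x y z w : R, a * x ^ 2 + b * y ^ 2 + c * z ^ 2 + d * w ^ 2 = 0 →
    x = 0 ∧ y = 0 ∧ z = 0 ∧ w = 0

theorem Int.eq_zero_of_forall_pow_dvd {p x : ℤ} (hp : p.natAbs ≠ 1) (h : ∀ k : ℕ, p ^ k ∣ x) :
    x = 0 := by
  by_contra hx
  exact FiniteMultiplicity.not_iff_forall.mpr h (Int.finiteMultiplicity_iff.mpr ⟨hp, hx⟩)

section Descent

variable {p : ℕ} {a₁ b₁ a₂ b₂ : ℤ}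

theorem BinaryAnisotropic.dvd_of_dvd (h : BinaryAnisotropic (ZMod p) a₁ b₁) {x y : ℤ}
    (hxy : (p : ℤ) ∣ a₁ * x ^ 2 + b₁ * y ^ 2) : (p : ℤ) ∣ x ∧ (p : ℤ) ∣ y := by
  simp only [← ZMod.intCast_zmod_eq_zero_iff_dvd] at hxy ⊢
  push_cast at hxy
  exact h _ _ hxy

/-- `Q₁ + p Q₂ = 0` forces `p ∣ Q₁`, so the zero of `Q₁` is divisible by `p`; dividing it out
turns the equation into `Q₂ + p Q₁ = 0`, and the same argument applies to `Q₂`. -/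
theorem exists_eq_mul_of_add_mul_eq_zero (hp : p ≠ 0) (h₁ : BinaryAnisotropic (ZMod p) a₁ b₁)
    (h₂ : BinaryAnisotropic (ZMod p) a₂ b₂) {x y z w : ℤ}
    (h : a₁ * x ^ 2 + b₁ * y ^ 2 + p * (a₂ * z ^ 2 + b₂ * w ^ 2) = 0) :
    ∃ x' y' z' w' : ℤ, x = p * x' ∧ y = p * y' ∧ z = p * z' ∧ w = p * w' ∧
      a₁ * x' ^ 2 + b₁ * y' ^ 2 + p * (a₂ * z' ^ 2 + b₂ * w' ^ 2) = 0 := by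
  have hp' : (p : ℤ) ≠ 0 := by exact_mod_cast hp
  obtain ⟨⟨x', rfl⟩, ⟨y', rfl⟩⟩ :=
    h₁.dvd_of_dvd (x := x) (y := y) ⟨-(a₂ * z ^ 2 + b₂ * w ^ 2), by linear_combination h⟩
  have h' : a₂ * z ^ 2 + b₂ * w ^ 2 = p * -(a₁ * x' ^ 2 + b₁ * y' ^ 2) := by
    refine mul_left_cancel₀ hp' ?_
    linear_combination h
  obtain ⟨⟨z', rfl⟩, ⟨w', rfl⟩⟩ := h₂.dvd_of_dvd ⟨_, h'⟩
  refine ⟨x', y', z', w', rfl, rfl, rfl, rfl, mul_left_cancel₀ (pow_ne_zero 2 hp') ?_⟩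
  linear_combination h

theorem pow_dvd_of_add_mul_eq_zero (hp : p ≠ 0) (h₁ : BinaryAnisotropic (ZMod p) a₁ b₁)
    (h₂ : BinaryAnisotropic (ZMod p) a₂ b₂) (k : ℕ) {x y z w : ℤ}
    (h : a₁ * x ^ 2 + b₁ * y ^ 2 + p * (a₂ * z ^ 2 + b₂ * w ^ 2) = 0) :
    (p : ℤ) ^ k ∣ x ∧ (p : ℤ) ^ k ∣ y ∧ (p : ℤ) ^ k ∣ z ∧ (p : ℤ) ^ k ∣ w := by
  induction k generalizing x y z w with
  | zero => simp
  | succ k ih =>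
    obtain ⟨x', y', z', w', rfl, rfl, rfl, rfl, h'⟩ :=
      exists_eq_mul_of_add_mul_eq_zero hp h₁ h₂ h
    obtain ⟨hx, hy, hz, hw⟩ := ih h'
    simp only [pow_succ', mul_dvd_mul_left _ hx, mul_dvd_mul_left _ hy, mul_dvd_mul_left _ hz,
      mul_dvd_mul_left _ hw, and_self]

theorem quaternaryAnisotropic_of_binaryAnisotropic_zmod (hp : 1 < p)
    (h₁ : BinaryAnisotropic (ZMod p) a₁ b₁) (h₂ : BinaryAnisotropic (ZMod p) a₂ b₂) :
    QuaternaryAnisotropic ℤ a₁ b₁ (p * a₂) (p * b₂) := by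
  intro x y z w h
  have hdvd k := pow_dvd_of_add_mul_eq_zero (by omega) h₁ h₂ k (x := x) (y := y) (z := z)
    (w := w) (by linear_combination h)
  have hp' : (p : ℤ).natAbs ≠ 1 := by omega
  exact ⟨Int.eq_zero_of_forall_pow_dvd hp' fun k ↦ (hdvd k).1,
    Int.eq_zero_of_forall_pow_dvd hp' fun k ↦ (hdvd k).2.1,
    Int.eq_zero_of_forall_pow_dvd hp' fun k ↦ (hdvd k).2.2.1,
    Int.eq_zero_of_forall_pow_dvd hp' fun k ↦ (hdvd k).2.2.2⟩

end Descent

theorem Rat.exists_intCast_eq_mul_of_den_dvd {q : ℚ} {m : ℤ} (h : (q.den : ℤ) ∣ m) :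
    ∃ z : ℤ, (z : ℚ) = m * q := by
  obtain ⟨k, rfl⟩ := h
  refine ⟨k * q.num, ?_⟩
  push_cast
  rw [← Rat.mul_den_eq_num]
  ring

theorem QuaternaryAnisotropic.intCast {a b c d : ℤ} (h : QuaternaryAnisotropic ℤ a b c d) :
    QuaternaryAnisotropic ℚ a b c d := by
  intro x y z w hq
  set n : ℤ := x.den * y.den * z.den * w.den
  have hn : (n : ℚ) ≠ 0 := by unfold n; positivity
  obtain ⟨X, hX⟩ := Rat.exists_intCast_eq_mul_of_den_dvd (q := x) (m := n)
    ⟨y.den * z.den * w.den, by ring⟩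
  obtain ⟨Y, hY⟩ := Rat.exists_intCast_eq_mul_of_den_dvd (q := y) (m := n)
    ⟨x.den * z.den * w.den, by ring⟩
  obtain ⟨Z, hZ⟩ := Rat.exists_intCast_eq_mul_of_den_dvd (q := z) (m := n)
    ⟨x.den * y.den * w.den, by ring⟩
  obtain ⟨W, hW⟩ := Rat.exists_intCast_eq_mul_of_den_dvd (q := w) (m := n)
    ⟨x.den * y.den * z.den, by ring⟩
  have hint : a * X ^ 2 + b * Y ^ 2 + c * Z ^ 2 + d * W ^ 2 = 0 := by
    have : ((a * X ^ 2 + b * Y ^ 2 + c * Z ^ 2 + d * W ^ 2 : ℤ) : ℚ) = 0 := by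
      push_cast
      rw [hX, hY, hZ, hW]
      linear_combination (n : ℚ) ^ 2 * hq
    exact_mod_cast this
  obtain ⟨rfl, rfl, rfl, rfl⟩ := h X Y Z W hint
  simp_all

namespace QuaternionAlgebra

theorem isUnit_of_isUnit_re_mul_star {R : Type*} [CommRing R] {c₁ c₂ c₃ : R}
    {a : ℍ[R,c₁,c₂,c₃]} (h : IsUnit (a * star a).re) : IsUnit a := by
  have hN : IsUnit (a * star a) := by
    rw [mul_star_eq_coe, ← coe_algebraMap]
    exact h.map _
  exact ((star_comm_self (x := a)).symm.isUnit_mul_iff.mp hN).1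

section CommRing

variable {R : Type*} [CommRing R] {c₁ c₂ : R}

theorem re_mul_star (a : ℍ[R,c₁,c₂]) :
    (a * star a).re = a.re ^ 2 - c₁ * a.imI ^ 2 - c₂ * a.imJ ^ 2 + c₁ * c₂ * a.imK ^ 2 := by
  simp only [re_mul, re_star, imI_star, imJ_star, imK_star]
  ring

/-- Since `a² = a.re² + (a - a.re)² + 2 a.re (a - a.re)` with `(a - a.re)²` scalar, a square
root of `-1` is either scalar or pure. -/
theorem re_sq_eq_neg_one_or_of_sq_eq_neg_one [NoZeroDivisors R] [NeZero (2 : R)]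
    {a : ℍ[R,c₁,c₂]} (h : a ^ 2 = -1) :
    a.re ^ 2 = -1 ∨ 1 + c₁ * a.imI ^ 2 + c₂ * a.imJ ^ 2 - c₁ * c₂ * a.imK ^ 2 = 0 := by
  have hre := congrArg re h
  have hI := congrArg imI h
  have hJ := congrArg imJ h
  have hK := congrArg imK h
  simp only [sq, re_mul, imI_mul, imJ_mul, imK_mul, re_neg, imI_neg, imJ_neg, imK_neg, re_one,
    imI_one, imJ_one, imK_one, zero_mul, add_zero, neg_zero] at hre hI hJ hK
  by_cases hr : a.re = 0
  · right
    rw [hr] at hre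
    linear_combination hre
  · left
    have h2r : 2 * a.re ≠ 0 := mul_ne_zero two_ne_zero hr
    have hI0 : a.imI = 0 := (mul_eq_zero.mp (by linear_combination hI)).resolve_left h2r
    have hJ0 : a.imJ = 0 := (mul_eq_zero.mp (by linear_combination hJ)).resolve_left h2r
    have hK0 : a.imK = 0 := (mul_eq_zero.mp (by linear_combination hK)).resolve_left h2r
    rw [hI0, hJ0, hK0] at hre
    linear_combination hre

end CommRing

section OrderedField

variable {K : Type*} [Field K] [LinearOrder K] [IsStrictOrderedRing K] {c₁ c₂ : K}

theorem not_exists_sq_eq_neg_one (h : QuaternaryAnisotropic K 1 c₁ c₂ (-(c₁ * c₂))) :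
    ¬∃ y : ℍ[K,c₁,c₂], y ^ 2 = -1 := by
  rintro ⟨y, hy⟩
  rcases re_sq_eq_neg_one_or_of_sq_eq_neg_one hy with hre | hpure
  · nlinarith [sq_nonneg y.re]
  · exact one_ne_zero (h 1 y.imI y.imJ y.imK (by linear_combination hpure)).1

theorem re_mul_star_pos (h₁ : c₁ < 0) (h₂ : c₂ < 0) {a : ℍ[K,c₁,c₂]} (ha : a ≠ 0) :
    0 < (a * star a).re := by
  have h₁₂ : 0 < c₁ * c₂ := mul_pos_of_neg_of_neg h₁ h₂
  rw [re_mul_star]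
  by_contra! hN
  apply ha
  obtain ⟨hre, hI, hJ, hK⟩ :
      a.re ^ 2 = 0 ∧ a.imI ^ 2 = 0 ∧ a.imJ ^ 2 = 0 ∧ a.imK ^ 2 = 0 := by
    refine ⟨?_, ?_, ?_, ?_⟩ <;>
      nlinarith [sq_nonneg a.re, sq_nonneg a.imI, sq_nonneg a.imJ, sq_nonneg a.imK,
        mul_nonneg h₁₂.le (sq_nonneg a.imK)]
  ext <;> simp_all

theorem isUnit_of_ne_zero (h₁ : c₁ < 0) (h₂ : c₂ < 0) {a : ℍ[K,c₁,c₂]} (ha : a ≠ 0) :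
    IsUnit a :=
  isUnit_of_isUnit_re_mul_star (re_mul_star_pos h₁ h₂ ha).ne'.isUnit

end OrderedField

end QuaternionAlgebra

open Quaternion in
/-- The form `x₁² - 2x₂² + 5x₃² - 10x₄²` is anisotropic over `ℚ`; equivalently,
`-1` has no square root in the quaternion algebra `(-2,-5)_ℚ`, which is a division
algebra. -/
theorem form_anisotropic_neg_two_neg_five :
    (∀ x₁ x₂ x₃ x₄ : ℚ,
        x₁ ^ 2 - 2 * x₂ ^ 2 + 5 * x₃ ^ 2 - 10 * x₄ ^ 2 = 0 →
        x₁ = 0 ∧ x₂ = 0 ∧ x₃ = 0 ∧ x₄ = 0) ∧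
      (¬∃ y : ℍ[ℚ, (-2 : ℚ), (-5 : ℚ)], y ^ 2 = -1) ∧
      (∀ x : ℍ[ℚ, (-2 : ℚ), (-5 : ℚ)], x ≠ 0 → IsUnit x) := by
  have h₁ : BinaryAnisotropic (ZMod 5) ((1 : ℤ) : ZMod 5) ((-2 : ℤ) : ZMod 5) := by
    unfold BinaryAnisotropic; decide
  have h₂ : BinaryAnisotropic (ZMod 5) ((-1 : ℤ) : ZMod 5) ((-2 : ℤ) : ZMod 5) := by
    unfold BinaryAnisotropic; decide
  have hplus : QuaternaryAnisotropic ℚ 1 (-2) 5 (-10) := by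
    have := (quaternaryAnisotropic_of_binaryAnisotropic_zmod (by norm_num) h₁ h₁).intCast
    norm_num at this ⊢
    exact this
  have hminus : QuaternaryAnisotropic ℚ 1 (-2) (-5) (-(-2 * -5)) := by
    have := (quaternaryAnisotropic_of_binaryAnisotropic_zmod (by norm_num) h₁ h₂).intCast
    norm_num at this ⊢
    exact this
  refine ⟨fun x₁ x₂ x₃ x₄ h ↦ hplus x₁ x₂ x₃ x₄ (by linear_combination h),
    QuaternionAlgebra.not_exists_sq_eq_neg_one hminus,
    fun x ↦ QuaternionAlgebra.isUnit_of_ne_zero (by norm_num) (by norm_num)⟩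
end
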